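/- Let S(c,t) = Σ_{r,s ≥ 0} N(r,s) c^r t^s ∈ ℚ⟦c,t⟧ be the two-variable ordinary generating function for decorated Dyck paths with no undecorated up-down-up factor, where N(r,s) is the number of such paths with r up-steps and s decorated double-up-steps. Then S satisfies the cubic equation S = 1 + c·(1+c)⁻¹·S² + t·S³, or equivalently (1+c)·S = (1+c) + c·S² + (1+c)·t·S³ in ℚ⟦c,t⟧. -/

import Mathlib

/-- The steps of a decorated Dyck path: an up-step `u`, a down-step `d`,
and a decorated double-up-step `T`. -/
inductive DStep : Type
  | u : DStep
  | d : DStep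
  | T : DStep
deriving DecidableEq

/-- The height change of each step. -/
def DStep.hchange : DStep → ℤ
  | .u => 1
  | .d => -1
  | .T => 2

/-- A decorated Dyck path: every partial sum of height changes is nonnegative and
the total sum of height changes is `0`. -/
def IsDecoratedDyck (w : List DStep) : Prop :=
  (∀ p : List DStep, p <+: w → 0 ≤ (p.map DStep.hchange).sum) ∧
    (w.map DStep.hchange).sum = 0

/-- `w` has no undecorated up-down-up factor. -/
def NoUDU (w : List DStep) : Prop :=
  ¬ [DStep.u, DStep.d, DStep.u] <:+: w

/-- `dyckCount r s` is the number of decorated Dyck paths with no undecorated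
up-down-up factor having exactly `r` up-steps and `s` decorated double-up-steps. -/
noncomputable def dyckCount (r s : ℕ) : ℕ :=
  Set.ncard {w : List DStep | IsDecoratedDyck w ∧ NoUDU w ∧
    w.count DStep.u = r ∧ w.count DStep.T = s}

/-- The two-variable ordinary generating function for decorated Dyck paths with no
undecorated up-down-up factor, by number of up-steps and double-up-steps. -/
noncomputable def dyckGF : MvPowerSeries (Fin 2) ℚ :=
  fun e => (dyckCount (e 0) (e 1) : ℚ)

/-!
Split a nonempty path at its first step. A path `u v` factors uniquely at its first return to
height `0` as `u A d B` with `A`, `B` decorated Dyck paths, and a path `T v` factors as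
`T A d B d C`. The factorization creates an undecorated `udu` only in the case `A = []` with `B`
starting with `u`; these exceptional pairs `(A, B)` correspond to the paths `B` starting with `u`.
So if `U` and `V` count the paths starting with `u` and `T`, then `S = 1 + U + V`,
`c S² = (1 + c) U` and `V = t S³`, which is the cubic equation.
-/

section CountGF

open Finset

namespace MvPowerSeries

variable {σ α β : Type*} (R : Type*) [CommSemiring R]

noncomputable def countGF (wt : α → σ →₀ ℕ) : MvPowerSeries σ R :=
  fun e => (Nat.card {a // wt a = e} : R)

variable {R}

theorem coeff_countGF (wt : α → σ →₀ ℕ) (e : σ →₀ ℕ) :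
    coeff e (countGF R wt) = Nat.card {a // wt a = e} := rfl

theorem countGF_eq_of_bijective {wa : α → σ →₀ ℕ} {wb : β → σ →₀ ℕ} {f : α → β}
    (hf : f.Bijective) (hw : ∀ a, wb (f a) = wa a) : countGF R wa = countGF R wb := by
  ext e
  simp only [coeff_countGF]
  congr 1
  exact Nat.card_congr <| (Equiv.ofBijective f hf).subtypeEquiv fun a => by simp [hw]

theorem finite_fiber_of_injective {wa : α → σ →₀ ℕ} {wb : β → σ →₀ ℕ} {f : α → β}
    (hf : f.Injective) (hw : ∀ a, wb (f a) = wa a) (hb : ∀ e, Finite {b // wb b = e})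
    (e : σ →₀ ℕ) : Finite {a // wa a = e} :=
  Finite.of_injective (fun a => (⟨f a, (hw a).trans a.2⟩ : {b // wb b = e}))
    fun _ _ h => Subtype.ext (hf (by simpa using h))

theorem finite_fiber_const_add {wt : α → σ →₀ ℕ} (h : ∀ e, Finite {a // wt a = e})
    (c e : σ →₀ ℕ) : Finite {a // c + wt a = e} :=
  Finite.of_injective
    (fun a => (⟨a, eq_tsub_of_add_eq ((add_comm _ _).trans a.2)⟩ : {a // wt a = e - c}))
    fun _ _ h => Subtype.ext (by simpa using h)

theorem countGF_const_add (wt : α → σ →₀ ℕ) (c : σ →₀ ℕ) :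
    countGF R (fun a => c + wt a) = monomial c 1 * countGF R wt := by
  ext e
  rw [coeff_monomial_mul, coeff_countGF, coeff_countGF, one_mul]
  split_ifs with hc
  · congr 1
    exact Nat.card_congr <| Equiv.subtypeEquivRight fun a => by
      rw [eq_tsub_iff_add_eq_of_le hc, add_comm]
  · have : IsEmpty {a // c + wt a = e} := ⟨fun a => hc (a.2 ▸ le_self_add)⟩
    simp

theorem countGF_punit (c : σ →₀ ℕ) : countGF R (fun _ : PUnit => c) = monomial c 1 := by
  classical
  ext e
  rw [coeff_countGF, coeff_monomial]
  split_ifs with h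
  · simp [h]
  · simp [Ne.symm h]

def fiberSumEquiv (wa : α → σ →₀ ℕ) (wb : β → σ →₀ ℕ) (e : σ →₀ ℕ) :
    {x // Sum.elim wa wb x = e} ≃ {a // wa a = e} ⊕ {b // wb b = e} :=
  Equiv.subtypeSum

theorem finite_fiber_sum_elim {wa : α → σ →₀ ℕ} {wb : β → σ →₀ ℕ}
    (ha : ∀ e, Finite {a // wa a = e}) (hb : ∀ e, Finite {b // wb b = e}) (e : σ →₀ ℕ) :
    Finite {x // Sum.elim wa wb x = e} :=
  have := ha e
  have := hb e
  Finite.of_equiv _ (fiberSumEquiv wa wb e).symm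

theorem countGF_sum_elim {wa : α → σ →₀ ℕ} {wb : β → σ →₀ ℕ}
    (ha : ∀ e, Finite {a // wa a = e}) (hb : ∀ e, Finite {b // wb b = e}) :
    countGF R (Sum.elim wa wb) = countGF R wa + countGF R wb := by
  ext e
  have := ha e
  have := hb e
  rw [map_add, coeff_countGF, coeff_countGF, coeff_countGF,
    Nat.card_congr (fiberSumEquiv wa wb e), Nat.card_sum, Nat.cast_add]

variable [DecidableEq σ]

def fiberProdEquiv (wa : α → σ →₀ ℕ) (wb : β → σ →₀ ℕ) (e : σ →₀ ℕ) :
    {p : α × β // wa p.1 + wb p.2 = e} ≃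
      Σ x : antidiagonal e, {a // wa a = x.1.1} × {b // wb b = x.1.2} where
  toFun p := ⟨⟨(wa p.1.1, wb p.1.2), mem_antidiagonal.2 p.2⟩, ⟨p.1.1, rfl⟩, ⟨p.1.2, rfl⟩⟩
  invFun x := ⟨(x.2.1, x.2.2), by rw [x.2.1.2, x.2.2.2]; exact mem_antidiagonal.1 x.1.2⟩
  left_inv _ := rfl
  right_inv := by
    rintro ⟨⟨⟨e₁, e₂⟩, he⟩, ⟨a, ha⟩, ⟨b, hb⟩⟩
    dsimp only at ha hb
    subst ha hb
    rfl

theorem finite_fiber_prod {wa : α → σ →₀ ℕ} {wb : β → σ →₀ ℕ}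
    (ha : ∀ e, Finite {a // wa a = e}) (hb : ∀ e, Finite {b // wb b = e}) (e : σ →₀ ℕ) :
    Finite {p : α × β // wa p.1 + wb p.2 = e} :=
  Finite.of_equiv _ (fiberProdEquiv wa wb e).symm

theorem countGF_prod {wa : α → σ →₀ ℕ} {wb : β → σ →₀ ℕ}
    (ha : ∀ e, Finite {a // wa a = e}) (hb : ∀ e, Finite {b // wb b = e}) :
    countGF R (fun p : α × β => wa p.1 + wb p.2) = countGF R wa * countGF R wb := by
  ext e
  rw [coeff_mul, coeff_countGF, Nat.card_congr (fiberProdEquiv wa wb e), Nat.card_sigma,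
    ← Finset.sum_coe_sort (antidiagonal e), Nat.cast_sum]
  simp only [Nat.card_prod, Nat.cast_mul, coeff_countGF]

end MvPowerSeries

end CountGF

namespace DStep

open List

instance : Fintype DStep where
  elems := {u, d, T}
  complete x := by cases x <;> simp

def height (w : List DStep) : ℤ := (w.map hchange).sum

@[simp] theorem height_nil : height [] = 0 := rfl

@[simp] theorem height_cons (a : DStep) (w : List DStep) :
    height (a :: w) = a.hchange + height w := by simp [height]

@[simp] theorem height_append (x y : List DStep) : height (x ++ y) = height x + height y := by
  simp [height]

theorem height_eq_count (w : List DStep) :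
    height w = w.count u + 2 * w.count T - w.count d := by
  induction w with
  | nil => simp
  | cons a w ih => cases a <;> simp [hchange, ih] <;> ring

theorem length_eq_count (w : List DStep) : w.length = w.count u + w.count d + w.count T := by
  induction w with
  | nil => simp
  | cons a w ih => cases a <;> simp [ih] <;> omega

def StaysNonnegFrom : ℤ → List DStep → Prop
  | h, [] => 0 ≤ h
  | h, a :: w => 0 ≤ h ∧ StaysNonnegFrom (h + a.hchange) w

@[simp] theorem staysNonnegFrom_nil (h : ℤ) : StaysNonnegFrom h [] ↔ 0 ≤ h := Iff.rfl

@[simp] theorem staysNonnegFrom_cons (h : ℤ) (a : DStep) (w : List DStep) :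
    StaysNonnegFrom h (a :: w) ↔ 0 ≤ h ∧ StaysNonnegFrom (h + a.hchange) w := Iff.rfl

theorem StaysNonnegFrom.nonneg {h : ℤ} {w : List DStep} (hw : StaysNonnegFrom h w) : 0 ≤ h := by
  cases w with
  | nil => exact hw
  | cons a w => exact hw.1

theorem staysNonnegFrom_iff_forall_prefix {h : ℤ} {w : List DStep} :
    StaysNonnegFrom h w ↔ ∀ p, p <+: w → 0 ≤ h + height p := by
  induction w generalizing h with
  | nil => simp
  | cons a w ih =>
    simp only [staysNonnegFrom_cons, ih, prefix_cons_iff]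
    constructor
    · rintro ⟨hh, hw⟩ p (rfl | ⟨t, rfl, ht⟩)
      · simpa using hh
      · simpa [add_assoc] using hw t ht
    · intro hw
      exact ⟨by simpa using hw [] (.inl rfl),
        fun t ht => by simpa [add_assoc] using hw (a :: t) (.inr ⟨t, rfl, ht⟩)⟩

theorem staysNonnegFrom_append {h : ℤ} {x y : List DStep} :
    StaysNonnegFrom h (x ++ y) ↔ StaysNonnegFrom h x ∧ StaysNonnegFrom (h + height x) y := by
  induction x generalizing h with
  | nil => simpa using fun hy => hy.nonneg
  | cons a x ih => simp [ih, and_assoc, add_assoc]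

theorem StaysNonnegFrom.mono {h h' : ℤ} {w : List DStep} (hw : StaysNonnegFrom h w)
    (hh : h ≤ h') : StaysNonnegFrom h' w := by
  induction w generalizing h h' with
  | nil => exact hw.trans hh
  | cons a w ih => exact ⟨hw.1.trans hh, ih hw.2 (by omega)⟩

theorem StaysNonnegFrom.height_nonneg {h : ℤ} {w : List DStep} (hw : StaysNonnegFrom h w) :
    0 ≤ h + height w :=
  (staysNonnegFrom_append (y := []) |>.1 (by rwa [append_nil])).2

def IsDyckFrom (h : ℤ) (w : List DStep) : Prop := StaysNonnegFrom h w ∧ h + height w = 0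

theorem isDyckFrom_cons {h : ℤ} {a : DStep} {w : List DStep} :
    IsDyckFrom h (a :: w) ↔ 0 ≤ h ∧ IsDyckFrom (h + a.hchange) w := by
  simp [IsDyckFrom, and_assoc, add_assoc]

theorem exists_eq_append_d_of_not_staysNonnegFrom {h : ℤ} (hh : 0 ≤ h) {w : List DStep}
    (hw : ¬StaysNonnegFrom h w) : ∃ A B, w = A ++ d :: B ∧ IsDyckFrom h A := by
  induction w generalizing h with
  | nil => exact absurd hh hw
  | cons a w ih =>
    by_cases ha : 0 ≤ h + a.hchange
    · obtain ⟨A, B, rfl, hA⟩ := ih ha fun h' => hw ⟨hh, h'⟩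
      exact ⟨a :: A, B, rfl, isDyckFrom_cons.2 ⟨hh, hA⟩⟩
    · obtain ⟨rfl, rfl⟩ : h = 0 ∧ a = d := by cases a <;> simp [hchange] at ha ⊢ <;> omega
      exact ⟨[], w, rfl, le_rfl, rfl⟩

theorem isDyckFrom_succ_iff {h : ℤ} (hh : 0 ≤ h) {w : List DStep} :
    IsDyckFrom (h + 1) w ↔ ∃ A B, w = A ++ d :: B ∧ IsDyckFrom 0 A ∧ IsDyckFrom h B := by
  constructor
  · rintro ⟨hw, hw0⟩
    -- shifted down by `h + 1`, the first descent of `w` to level `h` is its first step below `0`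
    have : ¬StaysNonnegFrom 0 w := fun h0 => by have := h0.height_nonneg; omega
    obtain ⟨A, B, rfl, hA⟩ := exists_eq_append_d_of_not_staysNonnegFrom le_rfl this
    have hA0 : height A = 0 := by simpa using hA.2
    refine ⟨A, B, rfl, hA, ?_, ?_⟩
    · simpa [hA0, hchange] using (staysNonnegFrom_append.1 hw).2.2
    · simp only [height_append, height_cons, hA0, hchange] at hw0
      omega
  · rintro ⟨A, B, rfl, ⟨hA, hA0⟩, hB, hB0⟩
    simp only [zero_add] at hA0
    refine ⟨staysNonnegFrom_append.2 ⟨hA.mono (by omega), ?_⟩, ?_⟩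
    · simpa [hA0, hchange] using ⟨by omega, hB⟩
    · simp only [height_append, height_cons, hA0, hchange]
      omega

noncomputable def weight (w : List DStep) : Fin 2 →₀ ℕ :=
  Finsupp.single 0 (w.count u) + Finsupp.single 1 (w.count T)

@[simp] theorem weight_nil : weight [] = 0 := by simp [weight]

@[simp] theorem weight_cons_u (w : List DStep) :
    weight (u :: w) = Finsupp.single 0 1 + weight w := by
  simp only [weight, count_cons_self, count_cons_of_ne, ne_eq, reduceCtorEq, not_false_eq_true,
    Finsupp.single_add]
  abel

@[simp] theorem weight_cons_d (w : List DStep) : weight (d :: w) = weight w := by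
  simp [weight]

@[simp] theorem weight_cons_T (w : List DStep) :
    weight (T :: w) = Finsupp.single 1 1 + weight w := by
  simp only [weight, count_cons_self, count_cons_of_ne, ne_eq, reduceCtorEq, not_false_eq_true,
    Finsupp.single_add]
  abel

@[simp] theorem weight_append (x y : List DStep) : weight (x ++ y) = weight x + weight y := by
  simp only [weight, count_append, Finsupp.single_add]
  abel

theorem weight_eq_iff {w : List DStep} {e : Fin 2 →₀ ℕ} :
    weight w = e ↔ w.count u = e 0 ∧ w.count T = e 1 := by
  simp [weight, Finsupp.ext_iff, Fin.forall_fin_two]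

end DStep

section DecoratedDyck

open DStep List

theorem isDecoratedDyck_iff_isDyckFrom_zero {w : List DStep} :
    IsDecoratedDyck w ↔ IsDyckFrom 0 w := by
  simp [IsDecoratedDyck, IsDyckFrom, staysNonnegFrom_iff_forall_prefix, height]

theorem IsDecoratedDyck.length_eq {w : List DStep} (hw : IsDecoratedDyck w) :
    w.length = 2 * w.count u + 3 * w.count T := by
  have := (isDecoratedDyck_iff_isDyckFrom_zero.1 hw).2
  have := height_eq_count w
  have := length_eq_count w
  omega

theorem isDecoratedDyck_nil : IsDecoratedDyck [] := by
  simp [isDecoratedDyck_iff_isDyckFrom_zero, IsDyckFrom]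

theorem isDecoratedDyck_u_cons_iff {v : List DStep} :
    IsDecoratedDyck (u :: v) ↔
      ∃ A B, v = A ++ d :: B ∧ IsDecoratedDyck A ∧ IsDecoratedDyck B := by
  simp only [isDecoratedDyck_iff_isDyckFrom_zero, isDyckFrom_cons, hchange]
  simpa using isDyckFrom_succ_iff (h := 0) le_rfl

theorem isDecoratedDyck_T_cons_iff {v : List DStep} :
    IsDecoratedDyck (T :: v) ↔ ∃ A B C, v = A ++ d :: (B ++ d :: C) ∧
      IsDecoratedDyck A ∧ IsDecoratedDyck B ∧ IsDecoratedDyck C := by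
  simp only [isDecoratedDyck_iff_isDyckFrom_zero, isDyckFrom_cons, hchange, le_refl, true_and]
  rw [show (0 : ℤ) + 2 = 1 + 1 by norm_num, isDyckFrom_succ_iff zero_le_one]
  conv_lhs => rw [show (1 : ℤ) = 0 + 1 by norm_num]
  simp only [isDyckFrom_succ_iff le_rfl]
  constructor
  · rintro ⟨A, _, rfl, hA, B, C, rfl, hB, hC⟩
    exact ⟨A, B, C, rfl, hA, hB, hC⟩
  · rintro ⟨A, B, C, rfl, hA, hB, hC⟩
    exact ⟨A, _, rfl, hA, B, C, rfl, hB, hC⟩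

theorem not_isDecoratedDyck_append_d_cons {A : List DStep} (hA : IsDecoratedDyck A)
    (B : List DStep) : ¬IsDecoratedDyck (A ++ d :: B) := by
  rw [isDecoratedDyck_iff_isDyckFrom_zero] at hA ⊢
  rintro ⟨hAB, -⟩
  have := (staysNonnegFrom_append.1 hAB).2
  simp only [hA.2, staysNonnegFrom_cons, hchange] at this
  have := this.2.nonneg
  omega

theorem not_isDecoratedDyck_d_cons (w : List DStep) : ¬IsDecoratedDyck (d :: w) :=
  not_isDecoratedDyck_append_d_cons isDecoratedDyck_nil w

theorem IsDecoratedDyck.getLast?_ne_u {w : List DStep} (hw : IsDecoratedDyck w) :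
    w.getLast? ≠ some u := by
  rw [isDecoratedDyck_iff_isDyckFrom_zero] at hw
  rcases eq_nil_or_concat w with rfl | ⟨L, a, rfl⟩
  · simp
  · rw [concat_eq_append] at hw ⊢
    obtain ⟨hL, hL0⟩ := hw
    have := (staysNonnegFrom_append.1 hL).1.height_nonneg
    rintro h
    simp only [getLast?_append, getLast?_singleton, Option.some_or, Option.some.injEq] at h
    subst h
    simp only [height_append, height_cons, height_nil, hchange] at hL0
    omega

theorem IsDecoratedDyck.append_d_cons_inj {A₁ A₂ B₁ B₂ : List DStep} (h₁ : IsDecoratedDyck A₁)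
    (h₂ : IsDecoratedDyck A₂) (h : A₁ ++ d :: B₁ = A₂ ++ d :: B₂) : A₁ = A₂ ∧ B₁ = B₂ := by
  rcases append_eq_append_iff.1 h with ⟨_ | ⟨x, C⟩, rfl, hC⟩ | ⟨_ | ⟨x, C⟩, rfl, hC⟩
  · simp_all
  · obtain ⟨rfl, rfl⟩ := cons.inj hC
    exact absurd h₂ (not_isDecoratedDyck_append_d_cons h₁ C)
  · simp_all
  · obtain ⟨rfl, rfl⟩ := cons.inj hC
    exact absurd h₁ (not_isDecoratedDyck_append_d_cons h₂ C)

theorem noUDU_nil : NoUDU [] := by simp [NoUDU]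

theorem noUDU_cons {a : DStep} {w : List DStep} :
    NoUDU (a :: w) ↔ ¬[u, d, u] <+: a :: w ∧ NoUDU w := by
  simp [NoUDU, infix_cons_iff]

theorem udu_prefix_append_d_cons_iff {x : List DStep} (hx : x.getLast? ≠ some u)
    (B : List DStep) : [u, d, u] <+: x ++ d :: B ↔ [u, d, u] <+: x := by
  rcases x with _ | ⟨a, _ | ⟨b, _ | ⟨c, x⟩⟩⟩ <;> simp_all
  exact fun h => absurd h.symm hx

theorem noUDU_append_d_cons {A : List DStep} (hA : A.getLast? ≠ some u) (B : List DStep) :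
    NoUDU (A ++ d :: B) ↔ NoUDU A ∧ NoUDU B := by
  induction A with
  | nil => simp [noUDU_cons, noUDU_nil]
  | cons a A ih =>
    have hA' : A.getLast? ≠ some u := by
      cases A with
      | nil => simp
      | cons b A => simpa using hA
    rw [noUDU_cons (w := A), ← udu_prefix_append_d_cons_iff hA B, cons_append, noUDU_cons,
      ih hA', and_assoc]

theorem noUDU_u_cons_append_d_cons_iff {A : List DStep} (hA : IsDecoratedDyck A)
    (B : List DStep) :
    NoUDU (u :: (A ++ d :: B)) ↔ NoUDU A ∧ NoUDU B ∧ ¬(A = [] ∧ B.head? = some u) := by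
  rw [noUDU_cons, noUDU_append_d_cons hA.getLast?_ne_u]
  rcases A with _ | ⟨a, A⟩
  · rcases B with _ | ⟨b, B⟩ <;> simp [noUDU_nil, and_comm, eq_comm]
  · have : a ≠ d := by rintro rfl; exact not_isDecoratedDyck_d_cons A hA
    simp [this.symm]

theorem noUDU_T_cons_append_d_cons_iff {A B : List DStep} (hA : IsDecoratedDyck A)
    (hB : IsDecoratedDyck B) (C : List DStep) :
    NoUDU (T :: (A ++ d :: (B ++ d :: C))) ↔ NoUDU A ∧ NoUDU B ∧ NoUDU C := by
  simp [noUDU_cons, noUDU_append_d_cons hA.getLast?_ne_u, noUDU_append_d_cons hB.getLast?_ne_u]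

end DecoratedDyck

abbrev DyckNoUDU : Type := {w : List DStep // IsDecoratedDyck w ∧ NoUDU w}

namespace DyckNoUDU

open DStep MvPowerSeries

abbrev StartingWith (a : DStep) : Type := {p : DyckNoUDU // p.1.head? = some a}

theorem finite_fiber_weight (e : Fin 2 →₀ ℕ) : Finite {p : DyckNoUDU // weight p.1 = e} :=
  have := (List.finite_length_eq DStep (2 * e 0 + 3 * e 1)).to_subtype
  Finite.of_injective (β := {l : List DStep | l.length = 2 * e 0 + 3 * e 1})
    (fun p => ⟨p.1.1, by
      obtain ⟨hu, hT⟩ := weight_eq_iff.1 p.2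
      simp [p.1.2.1.length_eq, hu, hT]⟩)
    fun p q h => Subtype.ext (Subtype.ext (by simpa using h))

theorem finite_fiber_weight_startingWith (a : DStep) (e : Fin 2 →₀ ℕ) :
    Finite {p : StartingWith a // weight p.1.1 = e} :=
  finite_fiber_of_injective Subtype.val_injective (fun _ => rfl) finite_fiber_weight e

theorem dyckGF_eq_countGF : dyckGF = countGF ℚ (fun p : DyckNoUDU => weight p.1) := by
  ext e
  rw [coeff_countGF]
  change (dyckCount (e 0) (e 1) : ℚ) = _
  rw [dyckCount, ← Nat.card_coe_set_eq]
  congr 1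
  refine Nat.card_congr ((Equiv.subtypeSubtypeEquivSubtypeInter
    (fun w => IsDecoratedDyck w ∧ NoUDU w) (fun w => weight w = e)).trans
    (Equiv.subtypeEquivRight fun w => ?_)).symm
  simp [weight_eq_iff, and_assoc]

def ofFirstStep : Unit ⊕ (StartingWith u ⊕ StartingWith T) → DyckNoUDU :=
  Sum.elim (fun _ => ⟨[], isDecoratedDyck_nil, noUDU_nil⟩) (Sum.elim Subtype.val Subtype.val)

theorem ofFirstStep_bijective : ofFirstStep.Bijective := by
  have ne_nil {a : DStep} (p : StartingWith a) : p.1.1 ≠ [] := fun h => by simpa [h] using p.2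
  have ne_of_head_ne {a b : DStep} (hab : a ≠ b) (p : StartingWith a) (q : StartingWith b) :
      p.1 ≠ q.1 := fun h => hab (by simpa [h, q.2] using p.2.symm)
  constructor
  · refine Function.Injective.sumElim (fun _ _ _ => rfl)
      (Subtype.val_injective.sumElim Subtype.val_injective (ne_of_head_ne (by decide))) ?_
    rintro _ (p | p) h <;> exact ne_nil p (congrArg Subtype.val h).symm
  · rintro ⟨_ | ⟨a, v⟩, hw, hn⟩
    · exact ⟨.inl (), rfl⟩
    · cases a with
      | u => exact ⟨.inr (.inl ⟨⟨_, hw, hn⟩, rfl⟩), rfl⟩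
      | d => exact absurd hw (not_isDecoratedDyck_d_cons v)
      | T => exact ⟨.inr (.inr ⟨⟨_, hw, hn⟩, rfl⟩), rfl⟩

def joinU (p : DyckNoUDU × DyckNoUDU) : StartingWith u ⊕ StartingWith u :=
  if h : p.1.1 = [] ∧ p.2.1.head? = some u then .inr ⟨p.2, h.2⟩
  else .inl ⟨⟨u :: (p.1.1 ++ d :: p.2.1),
    isDecoratedDyck_u_cons_iff.2 ⟨_, _, rfl, p.1.2.1, p.2.2.1⟩,
    (noUDU_u_cons_append_d_cons_iff p.1.2.1 _).2 ⟨p.1.2.2, p.2.2.2, h⟩⟩, rfl⟩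

theorem joinU_bijective : joinU.Bijective := by
  constructor
  · rintro ⟨A, B⟩ ⟨A', B'⟩ h
    unfold joinU at h
    split_ifs at h with h₁ h₂
    · simp only [Sum.inr.injEq, Subtype.ext_iff] at h
      exact Prod.ext (Subtype.ext (h₁.1.trans h₂.1.symm)) (Subtype.ext h)
    · simp only [Sum.inl.injEq, Subtype.ext_iff, List.cons.injEq, true_and] at h
      obtain ⟨hA, hB⟩ := IsDecoratedDyck.append_d_cons_inj A.2.1 A'.2.1 h
      exact Prod.ext (Subtype.ext hA) (Subtype.ext hB)
  · rintro (⟨⟨_ | ⟨a, v⟩, hw, hn⟩, hh⟩ | ⟨B, hB⟩)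
    · simp at hh
    · obtain rfl : a = u := by simpa using hh
      obtain ⟨A, B, rfl, hA, hB⟩ := isDecoratedDyck_u_cons_iff.1 hw
      obtain ⟨hnA, hnB, hgood⟩ := (noUDU_u_cons_append_d_cons_iff hA B).1 hn
      exact ⟨(⟨A, hA, hnA⟩, ⟨B, hB, hnB⟩), by simp [joinU, hgood]⟩
    · exact ⟨(⟨[], isDecoratedDyck_nil, noUDU_nil⟩, B), by simp [joinU, hB]⟩

theorem weight_joinU (p : DyckNoUDU × DyckNoUDU) :
    Sum.elim (fun q : StartingWith u => weight q.1.1)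
      (fun q => Finsupp.single 0 1 + weight q.1.1) (joinU p) =
      Finsupp.single 0 1 + (weight p.1.1 + weight p.2.1) := by
  unfold joinU
  split_ifs with h
  · simp [h.1]
  · simp

def joinT (p : DyckNoUDU × (DyckNoUDU × DyckNoUDU)) : StartingWith T :=
  ⟨⟨T :: (p.1.1 ++ d :: (p.2.1.1 ++ d :: p.2.2.1)),
    isDecoratedDyck_T_cons_iff.2 ⟨_, _, _, rfl, p.1.2.1, p.2.1.2.1, p.2.2.2.1⟩,
    (noUDU_T_cons_append_d_cons_iff p.1.2.1 p.2.1.2.1 _).2 ⟨p.1.2.2, p.2.1.2.2, p.2.2.2.2⟩⟩, rfl⟩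

theorem joinT_bijective : joinT.Bijective := by
  constructor
  · rintro ⟨A, B, C⟩ ⟨A', B', C'⟩ h
    simp only [joinT, Subtype.ext_iff, List.cons.injEq, true_and] at h
    obtain ⟨hA, h⟩ := IsDecoratedDyck.append_d_cons_inj A.2.1 A'.2.1 h
    obtain ⟨hB, hC⟩ := IsDecoratedDyck.append_d_cons_inj B.2.1 B'.2.1 h
    simp [Subtype.ext hA, Subtype.ext hB, Subtype.ext hC]
  · rintro ⟨⟨_ | ⟨a, v⟩, hw, hn⟩, hh⟩
    · simp at hh
    · obtain rfl : a = T := by simpa using hh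
      obtain ⟨A, B, C, rfl, hA, hB, hC⟩ := isDecoratedDyck_T_cons_iff.1 hw
      obtain ⟨hnA, hnB, hnC⟩ := (noUDU_T_cons_append_d_cons_iff hA hB C).1 hn
      exact ⟨(⟨A, hA, hnA⟩, ⟨B, hB, hnB⟩, ⟨C, hC, hnC⟩), rfl⟩

theorem weight_joinT (p : DyckNoUDU × (DyckNoUDU × DyckNoUDU)) :
    weight (joinT p).1.1 =
      Finsupp.single 1 1 + (weight p.1.1 + (weight p.2.1.1 + weight p.2.2.1)) := by
  simp [joinT]

noncomputable def startingWithGF (a : DStep) : MvPowerSeries (Fin 2) ℚ :=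
  countGF ℚ fun p : StartingWith a => weight p.1.1

theorem dyckGF_eq_one_add_startingWithGF :
    dyckGF = 1 + (startingWithGF u + startingWithGF T) := by
  rw [dyckGF_eq_countGF, ← countGF_eq_of_bijective ofFirstStep_bijective
      (wa := Sum.elim (fun _ => 0)
        (Sum.elim (fun p : StartingWith u => weight p.1.1) (fun p : StartingWith T => weight p.1.1)))
      (by rintro (_ | p | p) <;> simp [ofFirstStep]),
    countGF_sum_elim (fun _ => Finite.of_subsingleton) (finite_fiber_sum_elim
      (finite_fiber_weight_startingWith u) (finite_fiber_weight_startingWith T)),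
    countGF_sum_elim (finite_fiber_weight_startingWith u) (finite_fiber_weight_startingWith T),
    countGF_punit, monomial_zero_one, startingWithGF, startingWithGF]

theorem startingWithGF_u_add_X_mul :
    startingWithGF u + X 0 * startingWithGF u = X 0 * (dyckGF * dyckGF) := by
  have := countGF_eq_of_bijective (R := ℚ) joinU_bijective weight_joinU
  rwa [countGF_const_add (fun p : DyckNoUDU × DyckNoUDU => weight p.1.1 + weight p.2.1),
    countGF_prod finite_fiber_weight finite_fiber_weight,
    countGF_sum_elim (finite_fiber_weight_startingWith u)
      (finite_fiber_const_add (finite_fiber_weight_startingWith u) _),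
    countGF_const_add, ← X_def, ← dyckGF_eq_countGF, eq_comm] at this

theorem startingWithGF_T : startingWithGF T = X 1 * (dyckGF * (dyckGF * dyckGF)) := by
  have := countGF_eq_of_bijective (R := ℚ) (wb := fun p : StartingWith T => weight p.1.1)
    joinT_bijective weight_joinT
  rwa [countGF_const_add (fun p : DyckNoUDU × (DyckNoUDU × DyckNoUDU) =>
      weight p.1.1 + (weight p.2.1.1 + weight p.2.2.1)),
    countGF_prod finite_fiber_weight (finite_fiber_prod finite_fiber_weight finite_fiber_weight),
    countGF_prod finite_fiber_weight finite_fiber_weight, ← X_def, ← dyckGF_eq_countGF,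
    eq_comm] at this

end DyckNoUDU

theorem dyckGF_cubic :
    dyckGF = 1 + (MvPowerSeries.X 0) * (1 + MvPowerSeries.X 0)⁻¹ * dyckGF ^ 2 +
        (MvPowerSeries.X 1) * dyckGF ^ 3 ∧
      (1 + MvPowerSeries.X 0) * dyckGF =
        (1 + MvPowerSeries.X 0) + (MvPowerSeries.X 0) * dyckGF ^ 2 +
          (1 + MvPowerSeries.X 0) * (MvPowerSeries.X 1) * dyckGF ^ 3 := by
  have hS := DyckNoUDU.dyckGF_eq_one_add_startingWithGF
  have hU := DyckNoUDU.startingWithGF_u_add_X_mul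
  have hT := DyckNoUDU.startingWithGF_T
  set c : MvPowerSeries (Fin 2) ℚ := MvPowerSeries.X 0
  have hinv : (1 + c)⁻¹ * (1 + c) = 1 := MvPowerSeries.inv_mul_cancel _ (by simp [c])
  constructor
  · linear_combination hS + hT + (1 + c)⁻¹ * hU - DyckNoUDU.startingWithGF .u * hinv
  · linear_combination (1 + c) * hS + hU + (1 + c) * hT
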